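/- arXiv:1902.02262 — 4 statements merged into one kernel-verified Lean document; each statement's English description precedes it below -/
import Mathlib

section
/- Let (Q, pi) be a partitioned ice quiver and let k be a component preserving vertex lying in block pi_i. Then for every block index j, the restriction of mu_k(Q) to pi_j equals the mutation (or the identity, if k is not in pi_j) applied to the restriction of Q to pi_j; that is, mu_k(Q)|_{pi_j} = mu_k(Q|_{pi_j}) when j = i, and mu_k(Q)|_{pi_j} = Q|_{pi_j} when j ≠ i. -/
/-- Fomin–Zelevinsky matrix mutation at index `k`. -/
def mutB {V : Type*} [DecidableEq V] (k : V) (B : V → V → ℤ) : V → V → ℤ :=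
  fun i j =>
    if i = k ∨ j = k then -B i j
    else B i j + Int.sign (B i k) * max (B i k * B k j) 0

/-- Apply a sequence of mutations (left to right). -/
def mutSeq {V : Type*} [DecidableEq V] (σ : List V) (B : V → V → ℤ) : V → V → ℤ :=
  σ.foldl (fun M k => mutB k M) B

/-- The framed quiver of `B`: mutable vertices `Sum.inl`, frozen vertices `Sum.inr`. -/
def framed {V : Type*} [DecidableEq V] (B : V → V → ℤ) : (V ⊕ V) → (V ⊕ V) → ℤ
  | Sum.inl i, Sum.inl j => B i j
  | Sum.inl i, Sum.inr j => if i = j then 1 else 0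
  | Sum.inr i, Sum.inl j => if i = j then -1 else 0
  | Sum.inr _, Sum.inr _ => 0

/-- Apply a sequence of mutations at mutable vertices to an ice matrix on `V ⊕ V`. -/
def mutFr {V : Type*} [DecidableEq V] (σ : List V) (M : (V ⊕ V) → (V ⊕ V) → ℤ) :
    (V ⊕ V) → (V ⊕ V) → ℤ :=
  σ.foldl (fun N k => mutB (Sum.inl k) N) M

/-- A mutable vertex is green if no frozen vertex has an arrow into it. -/
def IsGreen {V : Type*} (M : (V ⊕ V) → (V ⊕ V) → ℤ) (v : V) : Prop :=
  ∀ f, 0 ≤ M (Sum.inl v) (Sum.inr f)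

/-- A mutable vertex is red if it has no arrows to frozen vertices. -/
def IsRed {V : Type*} (M : (V ⊕ V) → (V ⊕ V) → ℤ) (v : V) : Prop :=
  ∀ f, M (Sum.inl v) (Sum.inr f) ≤ 0

/-- A reddening sequence: after mutating the framed quiver, all mutable vertices are red. -/
def IsRedSeq {V : Type*} [DecidableEq V] (B : V → V → ℤ) (σ : List V) : Prop :=
  ∀ v, IsRed (mutFr σ (framed B)) v

/-- A maximal green sequence: a reddening sequence each of whose mutations is at a green vertex. -/
def IsMGS {V : Type*} [DecidableEq V] (B : V → V → ℤ) (σ : List V) : Prop :=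
  IsRedSeq B σ ∧ ∀ t (h : t < σ.length), IsGreen (mutFr (σ.take t) (framed B)) (σ[t]'h)

/-- A mutable vertex `k` is component preserving with respect to the block map `π`. -/
def CompPres {V ι : Type*} (π : V → ι) (M : (V ⊕ V) → (V ⊕ V) → ℤ) (k : V) : Prop :=
  ((∃ f, 0 < M (Sum.inl k) (Sum.inr f)) →
    ∀ a, 0 < M (Sum.inl a) (Sum.inl k) → π a = π k) ∧
  ((∃ f, M (Sum.inl k) (Sum.inr f) < 0) →
    ∀ a, 0 < M (Sum.inl k) (Sum.inl a) → π a = π k)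

/-- Every step of the sequence mutates at a component preserving vertex. -/
def CompPresSeq {V ι : Type*} [DecidableEq V] (π : V → ι) (σ : List V)
    (M : (V ⊕ V) → (V ⊕ V) → ℤ) : Prop :=
  ∀ t (h : t < σ.length), CompPres π (mutFr (σ.take t) M) (σ[t]'h)

/-- mutation at a component preserving vertex commutes with restriction
to a block (and acts as the identity on the other blocks). -/
theorem component_restriction_mutation {V ι : Type*} [DecidableEq V] [DecidableEq ι]
    (π : V → ι) (M : (V ⊕ V) → (V ⊕ V) → ℤ)
    (hskew : ∀ x y, M y x = -M x y)
    (hfz : ∀ f g : V, M (Sum.inr f) (Sum.inr g) = 0)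
    (k : V)
    (hsc : (∀ f, 0 ≤ M (Sum.inl k) (Sum.inr f)) ∨ (∀ f, M (Sum.inl k) (Sum.inr f) ≤ 0))
    (hnz : ∃ f, M (Sum.inl k) (Sum.inr f) ≠ 0)
    (hk : CompPres π M k) (j : ι) :
    (∀ h : π k = j,
      ∀ a b : {w : V ⊕ V // Sum.elim π π w = j},
        mutB (Sum.inl k) M a.1 b.1 =
          mutB (⟨Sum.inl k, h⟩ : {w : V ⊕ V // Sum.elim π π w = j})
            (fun a b => M a.1 b.1) a b) ∧
    (π k ≠ j → ∀ a b : {w : V ⊕ V // Sum.elim π π w = j},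
        mutB (Sum.inl k) M a.1 b.1 = M a.1 b.1) := by
  constructor
  · intro h a b
    have hiff : (a = (⟨Sum.inl k, h⟩ : {w : V ⊕ V // Sum.elim π π w = j}) ∨
        b = ⟨Sum.inl k, h⟩) ↔ (a.1 = Sum.inl k ∨ b.1 = Sum.inl k) := by
      constructor
      · rintro (rfl | rfl) <;> simp
      · rintro (h1 | h2)
        · exact Or.inl (Subtype.ext h1)
        · exact Or.inr (Subtype.ext h2)
    simp only [mutB, hiff]
  · intro hne a b
    have hak : a.1 ≠ Sum.inl k := fun e => hne (by rw [← a.2, e]; rfl)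
    have hbk : b.1 ≠ Sum.inl k := fun e => hne (by rw [← b.2, e]; rfl)
    have hprod : M a.1 (Sum.inl k) * M (Sum.inl k) b.1 ≤ 0 := by
      rcases hsc with hg | hr
      · have hpos : ∃ f, 0 < M (Sum.inl k) (Sum.inr f) := by
          obtain ⟨f, hf⟩ := hnz
          exact ⟨f, lt_of_le_of_ne (hg f) (Ne.symm hf)⟩
        have hcp := hk.1 hpos
        have h1 : M a.1 (Sum.inl k) ≤ 0 := by
          obtain ⟨a, ha⟩ := a
          cases a with
          | inl a' =>
            by_contra hlt
            push_neg at hlt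
            exact hne (by rw [← hcp a' hlt]; exact ha)
          | inr f => rw [hskew]; linarith [hg f]
        have h2 : 0 ≤ M (Sum.inl k) b.1 := by
          obtain ⟨b, hb⟩ := b
          cases b with
          | inl b' =>
            by_contra hlt
            push_neg at hlt
            have hlt' : 0 < M (Sum.inl b') (Sum.inl k) := by
              rw [hskew]; linarith
            exact hne (by rw [← hcp b' hlt']; exact hb)
          | inr f => exact hg f
        nlinarith
      · have hneg : ∃ f, M (Sum.inl k) (Sum.inr f) < 0 := by
          obtain ⟨f, hf⟩ := hnz
          exact ⟨f, lt_of_le_of_ne (hr f) hf⟩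
        have hcp := hk.2 hneg
        have h1 : 0 ≤ M a.1 (Sum.inl k) := by
          obtain ⟨a, ha⟩ := a
          cases a with
          | inl a' =>
            by_contra hlt
            push_neg at hlt
            have hlt' : 0 < M (Sum.inl k) (Sum.inl a') := by
              rw [hskew] at hlt; linarith
            exact hne (by rw [← hcp a' hlt']; exact ha)
          | inr f => rw [hskew]; linarith [hr f]
        have h2 : M (Sum.inl k) b.1 ≤ 0 := by
          obtain ⟨b, hb⟩ := b
          cases b with
          | inl b' =>
            by_contra hlt
            push_neg at hlt
            exact hne (by rw [← hcp b' hlt]; exact hb)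
          | inr f => exact hr f
        nlinarith
    have hmax : max (M a.1 (Sum.inl k) * M (Sum.inl k) b.1) 0 = 0 :=
      max_eq_right hprod
    simp only [mutB, hmax, mul_zero, add_zero]
    rw [if_neg (by tauto)]
end

section
/- In any quiver obtained from a framed quiver by a sequence of component preserving mutations (with respect to a fixed partition pi), every arrow incident to a frozen vertex joins that frozen vertex to a mutable vertex in the same block of pi; equivalently, the support of every c-vector is contained entirely within one block of the partition. -/
section Aux
variable {V ι : Type*} [DecidableEq V]

lemma sign_max_eq (a b : ℤ) :
    Int.sign a * max (a * b) 0 = Int.sign b * max (a * b) 0 := by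
  rcases le_or_gt (a * b) 0 with h | h
  · simp [max_eq_right h]
  · have ha : a ≠ 0 := by rintro rfl; simp at h
    rcases lt_or_gt_of_ne ha with ha' | ha'
    · have hb' : b < 0 := by nlinarith
      rw [Int.sign_eq_neg_one_iff_neg.mpr ha', Int.sign_eq_neg_one_iff_neg.mpr hb']
    · have hb' : 0 < b := by nlinarith
      rw [Int.sign_eq_one_iff_pos.mpr ha', Int.sign_eq_one_iff_pos.mpr hb']

lemma mutB_skew {W : Type*} [DecidableEq W] (k : W) (M : W → W → ℤ)
    (h : ∀ i j, M j i = -M i j) (i j : W) : mutB k M j i = -(mutB k M i j) := by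
  unfold mutB
  by_cases hc : i = k ∨ j = k
  · rw [if_pos hc, if_pos (Or.symm hc), h]
  · rw [if_neg hc, if_neg (fun hc' => hc (Or.symm hc'))]
    have h4 : M j k * M k i = M i k * M k j := by rw [h k j, h i k]; ring
    rw [h i j, h4, h k j, Int.sign_neg, neg_mul, neg_add]
    rw [show Int.sign (M k j) * max (M i k * M k j) 0
        = Int.sign (M i k) * max (M i k * M k j) 0 from (sign_max_eq _ _).symm]

lemma step_supp (π : V → ι) (M : (V ⊕ V) → (V ⊕ V) → ℤ)
    (hskew : ∀ i j, M j i = -M i j)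
    (hsupp : ∀ v f, M (Sum.inl v) (Sum.inr f) ≠ 0 → π f = π v)
    (k : V) (hk : CompPres π M k) :
    ∀ v f, mutB (Sum.inl k) M (Sum.inl v) (Sum.inr f) ≠ 0 → π f = π v := by
  intro v f hne
  unfold mutB at hne
  by_cases hvk : v = k
  · subst hvk
    rw [if_pos (Or.inl rfl)] at hne
    exact hsupp _ _ (by simpa using hne)
  · rw [if_neg (by simp [hvk])] at hne
    rcases le_or_gt (M (Sum.inl v) (Sum.inl k) * M (Sum.inl k) (Sum.inr f)) 0 with ht | ht
    · rw [max_eq_right ht, mul_zero, add_zero] at hne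
      exact hsupp _ _ hne
    · have hkf : M (Sum.inl k) (Sum.inr f) ≠ 0 := by
        rintro h0; rw [h0, mul_zero] at ht; exact lt_irrefl _ ht
      have hfk : π f = π k := hsupp _ _ hkf
      rcases lt_or_gt_of_ne hkf with hneg | hpos
      · have hvk' : M (Sum.inl v) (Sum.inl k) < 0 := by nlinarith
        have hpos' : 0 < M (Sum.inl k) (Sum.inl v) := by
          rw [hskew (Sum.inl v) (Sum.inl k)]; omega
        rw [hfk, hk.2 ⟨f, hneg⟩ v hpos']
      · have hvk' : 0 < M (Sum.inl v) (Sum.inl k) := by nlinarith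
        rw [hfk, hk.1 ⟨f, hpos⟩ v hvk']

lemma main_aux (B : V → V → ℤ) (hskew : ∀ i j, B j i = -B i j)
    (π : V → ι) (σ : List V) (hcp : CompPresSeq π σ (framed B)) :
    (∀ i j, mutFr σ (framed B) j i = -(mutFr σ (framed B) i j)) ∧
    (∀ v f, mutFr σ (framed B) (Sum.inl v) (Sum.inr f) ≠ 0 → π f = π v) := by
  induction σ using List.reverseRecOn with
  | nil =>
    refine ⟨fun i j => ?_, fun v f h => ?_⟩
    · show framed B j i = -(framed B i j)
      cases i <;> cases j <;> rename_i a b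
      · exact hskew a b
      · show (if b = a then -1 else 0 : ℤ) = -(if a = b then 1 else 0)
        by_cases hab : a = b <;> simp [hab, eq_comm]
      · show (if b = a then 1 else 0 : ℤ) = -(if a = b then -1 else 0)
        by_cases hab : a = b <;> simp [hab, eq_comm]
      · show (0 : ℤ) = -0
        simp
    · replace h : framed B (Sum.inl v) (Sum.inr f) ≠ 0 := h
      by_cases hvf : v = f
      · rw [hvf]
      · exfalso; apply h; simp [framed, hvf]
  | append_singleton σ k ih =>
    have hcp' : CompPresSeq π σ (framed B) := by
      intro t ht
      have ht' : t < (σ ++ [k]).length := by simp; omega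
      have := hcp t ht'
      rwa [List.take_append_of_le_length (le_of_lt ht),
        List.getElem_append_left ht] at this
    obtain ⟨ihskew, ihsupp⟩ := ih hcp'
    have hck : CompPres π (mutFr σ (framed B)) k := by
      have ht' : σ.length < (σ ++ [k]).length := by simp
      have hg : (σ ++ [k])[σ.length]'ht' = k := by simp
      have := hcp σ.length ht'
      rwa [List.take_append_of_le_length le_rfl, List.take_length, hg] at this
    have heq : mutFr (σ ++ [k]) (framed B) = mutB (Sum.inl k) (mutFr σ (framed B)) := by
      simp [mutFr, List.foldl_append]
    rw [heq]
    exact ⟨mutB_skew _ _ ihskew, step_supp π _ ihskew ihsupp k hck⟩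

end Aux
/-- after a component preserving sequence of mutations of a framed quiver,
the support of every c-vector lies in the block of its vertex, i.e. every arrow between
a mutable vertex and a frozen vertex stays within one block of the partition. -/
theorem cvector_support {V ι : Type*} [DecidableEq V]
    (B : V → V → ℤ) (hskew : ∀ i j, B j i = -B i j)
    (π : V → ι) (σ : List V)
    (hcp : CompPresSeq π σ (framed B)) :
    ∀ v f : V, mutFr σ (framed B) (Sum.inl v) (Sum.inr f) ≠ 0 → π f = π v := (main_aux B hskew π σ hcp).2
end

section
/- Let (hat{Q}, hat{pi}) be a partitioned framed quiver and sigma a sequence of component preserving mutations. For any mutable vertex v in block pi_i, the vertex v is green (respectively red) in mu_sigma(hat{Q}) if and only if it is green (respectively red) in the restriction mu_sigma(hat{Q})_i of mu_sigma(hat{Q}) to the block containing v. -/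
/-! Mutation at a mutable vertex `k` changes the entry `M v f` (for `v ≠ k`) only by a term that is
nonzero exactly when `v → k → f` or `f → k → v`, i.e. `M v k` and `M k f` have the same sign.
Component preservation at `k` then forces `v` into the block of `k`, and `f` lies in that block
because `M k f ≠ 0`. Hence the framed quiver keeps the invariant that every mutable vertex is
joined only to frozen vertices of its own block, so colours can be read off inside the block. -/

def IsSkewSymm {W : Type*} (M : W → W → ℤ) : Prop :=
  ∀ i j, M j i = -M i j

def FrozenArrowsInBlock {V ι : Type*} (π : V → ι) (M : (V ⊕ V) → (V ⊕ V) → ℤ) : Prop :=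
  ∀ v f, π f ≠ π v → M (Sum.inl v) (Sum.inr f) = 0

lemma Int.sign_mul_max_mul_zero_comm (a b : ℤ) :
    a.sign * max (a * b) 0 = b.sign * max (a * b) 0 := by
  rcases le_or_gt (a * b) 0 with h | h
  · simp [max_eq_right h]
  · rcases mul_pos_iff.mp h with ⟨ha, hb⟩ | ⟨ha, hb⟩
    · rw [Int.sign_eq_one_iff_pos.mpr ha, Int.sign_eq_one_iff_pos.mpr hb]
    · rw [Int.sign_eq_neg_one_iff_neg.mpr ha, Int.sign_eq_neg_one_iff_neg.mpr hb]

lemma IsSkewSymm.mutB {W : Type*} [DecidableEq W] {M : W → W → ℤ} (h : IsSkewSymm M) (k : W) :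
    IsSkewSymm (mutB k M) := by
  intro i j
  unfold _root_.mutB
  by_cases hk : i = k ∨ j = k
  · rw [if_pos hk, if_pos hk.symm, h i j]
  · rw [if_neg hk, if_neg (by tauto), h i j, h k j, h i k, Int.sign_neg, neg_mul_neg,
      mul_comm (M k j), Int.sign_mul_max_mul_zero_comm (M i k) (M k j)]
    ring

lemma IsSkewSymm.mutFr {V : Type*} [DecidableEq V] {M : (V ⊕ V) → (V ⊕ V) → ℤ}
    (h : IsSkewSymm M) (σ : List V) : IsSkewSymm (mutFr σ M) := by
  induction σ generalizing M with
  | nil => exact h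
  | cons k σ ih => exact ih (h.mutB _)

lemma isSkewSymm_framed {V : Type*} [DecidableEq V] {B : V → V → ℤ} (hB : IsSkewSymm B) :
    IsSkewSymm (framed B) := by
  rintro (i | i) (j | j)
  · exact hB i j
  · by_cases h : i = j <;> simp [framed, h, eq_comm]
  · by_cases h : i = j <;> simp [framed, h, eq_comm]
  · simp [framed]

lemma frozenArrowsInBlock_framed {V ι : Type*} [DecidableEq V] (π : V → ι) (B : V → V → ℤ) :
    FrozenArrowsInBlock π (framed B) := by
  intro v f hvf
  have : v ≠ f := by rintro rfl; exact hvf rfl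
  simp [framed, this]

lemma compPresSeq_cons {V ι : Type*} [DecidableEq V] {π : V → ι} {k : V} {σ : List V}
    {M : (V ⊕ V) → (V ⊕ V) → ℤ} :
    CompPresSeq π (k :: σ) M ↔ CompPres π M k ∧ CompPresSeq π σ (mutB (Sum.inl k) M) := by
  constructor
  · intro h
    exact ⟨h 0 (by simp), fun t ht => h (t + 1) (by simpa using ht)⟩
  · rintro ⟨hk, hσ⟩ (_ | t) ht
    · exact hk
    · exact hσ t (by simpa using ht)

lemma FrozenArrowsInBlock.mutB {V ι : Type*} [DecidableEq V] {π : V → ι}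
    {M : (V ⊕ V) → (V ⊕ V) → ℤ} (hM : FrozenArrowsInBlock π M) (hs : IsSkewSymm M) {k : V}
    (hk : CompPres π M k) : FrozenArrowsInBlock π (mutB (Sum.inl k) M) := by
  intro v f hvf
  unfold _root_.mutB
  by_cases hvk : v = k
  · subst hvk
    simp [hM v f hvf]
  rw [if_neg (by simp [hvk]), hM v f hvf, zero_add, max_eq_right, mul_zero]
  by_contra! hpos
  have hkf : M (Sum.inl k) (Sum.inr f) ≠ 0 := by
    rintro h; rw [h, mul_zero] at hpos; exact lt_irrefl 0 hpos
  have hfk : π f = π k := by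
    by_contra h; exact hkf (hM k f h)
  have hvk : π v = π k := by
    rcases mul_pos_iff.mp hpos with ⟨hvk, hkf⟩ | ⟨hvk, hkf⟩
    · exact hk.1 ⟨f, hkf⟩ v hvk
    · exact hk.2 ⟨f, hkf⟩ v (by rw [hs]; omega)
  exact hvf (hfk.trans hvk.symm)

lemma FrozenArrowsInBlock.mutFr {V ι : Type*} [DecidableEq V] {π : V → ι}
    {M : (V ⊕ V) → (V ⊕ V) → ℤ} (hM : FrozenArrowsInBlock π M) (hs : IsSkewSymm M)
    {σ : List V} (hσ : CompPresSeq π σ M) : FrozenArrowsInBlock π (mutFr σ M) := by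
  induction σ generalizing M with
  | nil => exact hM
  | cons k σ ih =>
    obtain ⟨hk, hσ⟩ := compPresSeq_cons.mp hσ
    exact ih (hM.mutB hs hk) (hs.mutB _) hσ

lemma FrozenArrowsInBlock.forall_iff {V ι : Type*} {π : V → ι}
    {M : (V ⊕ V) → (V ⊕ V) → ℤ} (hM : FrozenArrowsInBlock π M) {p : ℤ → Prop} (hp : p 0)
    (v : V) : (∀ f, p (M (Sum.inl v) (Sum.inr f))) ↔
      ∀ f, π f = π v → p (M (Sum.inl v) (Sum.inr f)) := by
  refine ⟨fun h f _ => h f, fun h f => ?_⟩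
  by_cases hf : π f = π v
  · exact h f hf
  · rw [hM v f hf]; exact hp

/-- after a component preserving sequence of mutations, a mutable vertex is
green (resp. red) in the whole quiver iff it is green (resp. red) in the restriction of
the quiver to its own block. -/
theorem color_local {V ι : Type*} [DecidableEq V]
    (B : V → V → ℤ) (hskew : ∀ i j, B j i = -B i j)
    (π : V → ι) (σ : List V)
    (hcp : CompPresSeq π σ (framed B)) (v : V) :
    (IsGreen (mutFr σ (framed B)) v ↔
      ∀ f, π f = π v → 0 ≤ mutFr σ (framed B) (Sum.inl v) (Sum.inr f)) ∧
    (IsRed (mutFr σ (framed B)) v ↔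
      ∀ f, π f = π v → mutFr σ (framed B) (Sum.inl v) (Sum.inr f) ≤ 0) := by
  have hloc : FrozenArrowsInBlock π (mutFr σ (framed B)) :=
    (frozenArrowsInBlock_framed π B).mutFr (isSkewSymm_framed hskew) hcp
  exact ⟨hloc.forall_iff (p := (0 ≤ ·)) le_rfl v,
    hloc.forall_iff (p := (· ≤ 0)) le_rfl v⟩
end

section
/- If Q is an acyclic quiver and (i_1, ..., i_n) is an admissible numbering of its vertices by sources (i.e., {i_1,...,i_n} = V(Q) and i_j is a source of mu_{i_{j-1}} ∘ ... ∘ mu_{i_1}(Q) for each j), then (i_1, ..., i_n) is a maximal green sequence for Q. -/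
/-! Mutating at a green source `k` only reverses the frozen arrows at `k`: no mutable vertex
has an arrow into `k`, so the mutation adds no arrow between another vertex and a frozen one.
Since the numbering mutates each vertex once, by induction the frozen arrows after `t` steps are
`k' → k` for the `t` mutated vertices and `i → i'` for the others. So each vertex is still green
when it is mutated, and once every vertex has been mutated all are red. -/

theorem List.Nodup.getElem_notMem_take {α : Type*} {l : List α} (hl : l.Nodup) {t : ℕ}
    (h : t < l.length) : l[t] ∉ l.take t := fun hmem =>
  List.disjoint_take_drop hl le_rfl hmem (List.drop_eq_getElem_cons h ▸ List.mem_cons_self)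

section Mutation

variable {V : Type*} [DecidableEq V]

theorem mutFr_inl_inl (σ : List V) (M : (V ⊕ V) → (V ⊕ V) → ℤ) (i j : V) :
    mutFr σ M (Sum.inl i) (Sum.inl j) =
      mutSeq σ (fun a b => M (Sum.inl a) (Sum.inl b)) i j := by
  induction σ generalizing M with
  | nil => rfl
  | cons k σ ih =>
    refine (ih _).trans (congrArg (fun B => mutSeq σ B i j) ?_)
    funext a b
    simp [mutB]

theorem mutFr_append_singleton (σ : List V) (k : V) (M : (V ⊕ V) → (V ⊕ V) → ℤ) :
    mutFr (σ ++ [k]) M = mutB (Sum.inl k) (mutFr σ M) := by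
  simp [mutFr]

theorem mutB_inl_inr_self (M : (V ⊕ V) → (V ⊕ V) → ℤ) (k f : V) :
    mutB (Sum.inl k) M (Sum.inl k) (Sum.inr f) = -M (Sum.inl k) (Sum.inr f) := by
  simp [mutB]

theorem mutB_inl_inr_of_isGreen_of_source {M : (V ⊕ V) → (V ⊕ V) → ℤ} {k : V}
    (hgreen : IsGreen M k) (hsource : ∀ u, M (Sum.inl u) (Sum.inl k) ≤ 0) {i : V} (hik : i ≠ k)
    (f : V) : mutB (Sum.inl k) M (Sum.inl i) (Sum.inr f) = M (Sum.inl i) (Sum.inr f) := by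
  have hprod : M (Sum.inl i) (Sum.inl k) * M (Sum.inl k) (Sum.inr f) ≤ 0 :=
    mul_nonpos_of_nonpos_of_nonneg (hsource i) (hgreen f)
  simp [mutB, hik, max_eq_right hprod]

theorem mutFr_take_framed_inl_inr (B : V → V → ℤ) {σ : List V} (hnodup : σ.Nodup)
    (hsrc : ∀ t (h : t < σ.length), ∀ u, mutSeq (σ.take t) B u (σ[t]'h) ≤ 0) :
    ∀ t ≤ σ.length, ∀ i f, mutFr (σ.take t) (framed B) (Sum.inl i) (Sum.inr f) =
      if i = f then (if i ∈ σ.take t then -1 else 1) else 0 := by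
  intro t
  induction t with
  | zero => simp [mutFr, framed]
  | succ t ih =>
    intro ht i f
    have h : t < σ.length := ht
    have hk : σ[t] ∉ σ.take t := hnodup.getElem_notMem_take h
    rw [← List.take_concat_get' σ t h, mutFr_append_singleton]
    by_cases hik : i = σ[t]
    · subst hik
      rw [mutB_inl_inr_self, ih h.le]
      split_ifs <;> simp_all
    · have hgreen : IsGreen (mutFr (σ.take t) (framed B)) σ[t] := fun g => by
        rw [ih h.le]
        split_ifs <;> simp_all
      have hsource : ∀ u, mutFr (σ.take t) (framed B) (Sum.inl u) (Sum.inl σ[t]) ≤ 0 := fun u => by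
        simpa [mutFr_inl_inl, framed] using hsrc t h u
      rw [mutB_inl_inr_of_isGreen_of_source hgreen hsource hik, ih h.le]
      simp only [List.mem_append, List.mem_singleton, hik, or_false]

end Mutation

theorem admissible_source_mgs_general {n : ℕ} (B : Fin n → Fin n → ℤ)
    (σ : List (Fin n)) (hnodup : σ.Nodup) (hall : ∀ v, v ∈ σ)
    (hsrc : ∀ t (h : t < σ.length), ∀ u, mutSeq (σ.take t) B u (σ[t]'h) ≤ 0) :
    IsMGS B σ := by
  have hframe := mutFr_take_framed_inl_inr B hnodup hsrc
  refine ⟨fun v f => ?_, fun t h f => ?_⟩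
  · rw [← List.take_length (l := σ), hframe σ.length le_rfl v f, List.take_length]
    split_ifs <;> simp_all
  · rw [hframe t h.le σ[t] f, if_neg (hnodup.getElem_notMem_take h)]
    split_ifs <;> simp

/-- for an acyclic quiver, an admissible numbering of the vertices
by sources is a maximal green sequence. -/
theorem admissible_source_mgs {n : ℕ} (B : Fin n → Fin n → ℤ)
    (hskew : ∀ i j, B j i = -B i j)
    (hacyc : ∃ f : Fin n → ℕ, ∀ i j, 0 < B i j → f i < f j)
    (σ : List (Fin n)) (hnodup : σ.Nodup) (hall : ∀ v, v ∈ σ)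
    (hsrc : ∀ t (h : t < σ.length), ∀ u, mutSeq (σ.take t) B u (σ[t]'h) ≤ 0) :
    IsMGS B σ :=
  admissible_source_mgs_general B σ hnodup hall hsrc
end
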